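/- arXiv:1702.01257 — 3 statements merged into one kernel-verified Lean document; each statement's English description precedes it below -/
import Mathlib

section
/- Suppose D is a symmetric (v, k, λ) design admitting a flag-transitive and point-primitive almost simple automorphism group G with socle X, where X is a finite simple group of Lie type in characteristic p. Suppose the point-stabiliser G_α does not contain X and is not a parabolic subgroup of G. Then gcd(p, v−1) = 1. -/
namespace Paper

/-! ### Group-theoretic preliminaries -/

/-- A minimal normal subgroup of a group. -/
def IsMinimalNormal {G : Type*} [Group G] (N : Subgroup G) : Prop :=
  N.Normal ∧ N ≠ ⊥ ∧ ∀ M : Subgroup G, M.Normal → M ≠ ⊥ → M ≤ N → M = N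

/-- The socle of a group: the subgroup generated by all minimal normal subgroups. -/
def socle (G : Type*) [Group G] : Subgroup G :=
  ⨆ N ∈ {N : Subgroup G | IsMinimalNormal N}, N

/-- `G` is almost simple with socle the (nonabelian simple) subgroup `X`. -/
def IsAlmostSimpleWithSocle (G : Type*) [Group G] (X : Subgroup G) : Prop :=
  socle G = X ∧ IsSimpleGroup X ∧ ∃ x y : X, x * y ≠ y * x

/-- The order of the outer automorphism group `Out(X) = Aut(X)/Inn(X)`. -/
noncomputable def outCard (X : Type*) [Group X] : ℕ :=
  Nat.card (MulAut X) / Nat.card (MulAut.conj : X →* MulAut X).range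

/-- A subgroup of a finite group of Lie type in characteristic `p` is parabolic iff it
contains a Sylow `p`-subgroup (by the Borel–Tits theorem); we use this characterization. -/
def IsParabolic (p : ℕ) {X : Type*} [Group X] (P : Subgroup X) : Prop :=
  ∃ Q : Sylow p X, (Q : Subgroup X) ≤ P

/-! ### Designs -/

/-- `I` is the incidence relation of a symmetric `(v, k, λ)` design: there are `v` points,
`v` blocks, every block is incident with exactly `k` points, and any two distinct points
are incident with exactly `λ` common blocks. -/
structure IsSymmetricDesign {P B : Type*} (I : P → B → Prop) (v k lam : ℕ) : Prop where
  card_points : Nat.card P = v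
  card_blocks : Nat.card B = v
  card_block : ∀ b : B, Nat.card {x : P // I x b} = k
  card_pair : ∀ x y : P, x ≠ y → Nat.card {b : B // I x b ∧ I y b} = lam

/-- A symmetric `(v,k,λ)` design is nontrivial if `2 < k < v - 2`. -/
def NontrivialDesign (v k : ℕ) : Prop := 2 < k ∧ k + 2 < v

/-- The action of `G` on points and blocks preserves the incidence relation,
i.e. `G` acts by automorphisms of the design. -/
def ActsOnDesign (G : Type*) [Group G] {P B : Type*} [MulAction G P] [MulAction G B]
    (I : P → B → Prop) : Prop :=
  ∀ (g : G) (x : P) (b : B), I (g • x) (g • b) ↔ I x b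

/-- `G` is transitive on incident point–block pairs (flags). -/
def IsFlagTransitive (G : Type*) [Group G] {P B : Type*} [MulAction G P] [MulAction G B]
    (I : P → B → Prop) : Prop :=
  ∀ (x x' : P) (b b' : B), I x b → I x' b' → ∃ g : G, g • x = x' ∧ g • b = b'

/-- `G` acts primitively on the points: transitively, and every block (of imprimitivity)
is trivial. -/
def IsPointPrimitive (G : Type*) [Group G] (P : Type*) [MulAction G P] : Prop :=
  MulAction.IsPretransitive G P ∧
    ∀ s : Set P, MulAction.IsBlock G s → s.Subsingleton ∨ s = Set.univ

/-! ### Orders of the finite simple groups of Lie type -/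

/-- `|A_{n-1}^ε(q)|`, i.e. `|PSL_n(q)|` for `ε = 1` and `|PSU_n(q)|` for `ε = -1`. -/
def ordPSL (n : ℕ) (ε : ℤ) (q : ℕ) : ℤ :=
  ((q : ℤ) ^ (n * (n - 1) / 2) * ∏ i ∈ Finset.Icc 2 n, ((q : ℤ) ^ i - ε ^ i)) /
    (Int.gcd (n : ℤ) ((q : ℤ) - ε) : ℤ)

/-- `|C_n(q)| = |PSp_{2n}(q)|` (which also equals `|B_n(q)| = |Ω_{2n+1}(q)|`). -/
def ordPSp (n : ℕ) (q : ℕ) : ℤ :=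
  ((q : ℤ) ^ (n ^ 2) * ∏ i ∈ Finset.Icc 1 n, ((q : ℤ) ^ (2 * i) - 1)) /
    (Int.gcd 2 ((q : ℤ) - 1) : ℤ)

/-- `|D_n^ε(q)| = |PΩ_{2n}^ε(q)|`. -/
def ordPOmega (n : ℕ) (ε : ℤ) (q : ℕ) : ℤ :=
  ((q : ℤ) ^ (n * (n - 1)) * ((q : ℤ) ^ n - ε) *
      ∏ i ∈ Finset.Icc 1 (n - 1), ((q : ℤ) ^ (2 * i) - 1)) /
    (Int.gcd 4 ((q : ℤ) ^ n - ε) : ℤ)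

def ord2B2 (q : ℕ) : ℤ := (q:ℤ)^2 * ((q:ℤ)^2 + 1) * ((q:ℤ) - 1)
def ord2G2 (q : ℕ) : ℤ := (q:ℤ)^3 * ((q:ℤ)^3 + 1) * ((q:ℤ) - 1)
def ord3D4 (q : ℕ) : ℤ := (q:ℤ)^12 * ((q:ℤ)^8 + (q:ℤ)^4 + 1) * ((q:ℤ)^6 - 1) * ((q:ℤ)^2 - 1)
def ord2F4 (q : ℕ) : ℤ :=
  (q:ℤ)^12 * ((q:ℤ)^6 + 1) * ((q:ℤ)^4 - 1) * ((q:ℤ)^3 + 1) * ((q:ℤ) - 1)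
def ordG2 (q : ℕ) : ℤ := (q:ℤ)^6 * ((q:ℤ)^6 - 1) * ((q:ℤ)^2 - 1)
def ordF4 (q : ℕ) : ℤ :=
  (q:ℤ)^24 * ((q:ℤ)^12 - 1) * ((q:ℤ)^8 - 1) * ((q:ℤ)^6 - 1) * ((q:ℤ)^2 - 1)
def ordE6 (ε : ℤ) (q : ℕ) : ℤ :=
  ((q:ℤ)^36 * ((q:ℤ)^12 - 1) * ((q:ℤ)^9 - ε) * ((q:ℤ)^8 - 1) * ((q:ℤ)^6 - 1) *
      ((q:ℤ)^5 - ε) * ((q:ℤ)^2 - 1)) / (Int.gcd 3 ((q:ℤ) - ε) : ℤ)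
def ordE7 (q : ℕ) : ℤ :=
  ((q:ℤ)^63 * ((q:ℤ)^18 - 1) * ((q:ℤ)^14 - 1) * ((q:ℤ)^12 - 1) * ((q:ℤ)^10 - 1) *
      ((q:ℤ)^8 - 1) * ((q:ℤ)^6 - 1) * ((q:ℤ)^2 - 1)) / (Int.gcd 2 ((q:ℤ) - 1) : ℤ)
def ordE8 (q : ℕ) : ℤ :=
  (q:ℤ)^120 * ((q:ℤ)^30 - 1) * ((q:ℤ)^24 - 1) * ((q:ℤ)^20 - 1) * ((q:ℤ)^18 - 1) *
    ((q:ℤ)^14 - 1) * ((q:ℤ)^12 - 1) * ((q:ℤ)^8 - 1) * ((q:ℤ)^2 - 1)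

/-- `X` is a (finite) simple group of the given order.  By the classification of finite
simple groups, a finite simple group of Lie type is determined up to isomorphism by its
order, with exceptions irrelevant here; we use this to identify the groups of Lie type. -/
def IsSimpleOfOrder (X : Type*) [Group X] (n : ℤ) : Prop :=
  IsSimpleGroup X ∧ (Nat.card X : ℤ) = n

/-- The two signs `ε = ±1`. -/
def pm : Set ℤ := {1, -1}

/-- `X` is a finite simple exceptional group of Lie type in characteristic `p`,
defined over the field with `q` elements. -/
def IsExcLieOfChar (p q : ℕ) (X : Type*) [Group X] : Prop :=
  p.Prime ∧ ∃ a : ℕ, 0 < a ∧ q = p ^ a ∧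
    ((p = 2 ∧ Odd a ∧ 3 ≤ a ∧ IsSimpleOfOrder X (ord2B2 q)) ∨
     (p = 3 ∧ Odd a ∧ 3 ≤ a ∧ IsSimpleOfOrder X (ord2G2 q)) ∨
     (p = 2 ∧ Odd a ∧ 3 ≤ a ∧ IsSimpleOfOrder X (ord2F4 q)) ∨
     IsSimpleOfOrder X (ord3D4 q) ∨
     IsSimpleOfOrder X (ordG2 q) ∨
     IsSimpleOfOrder X (ordF4 q) ∨
     (∃ ε ∈ pm, IsSimpleOfOrder X (ordE6 ε q)) ∨
     IsSimpleOfOrder X (ordE7 q) ∨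
     IsSimpleOfOrder X (ordE8 q))

/-- `X` is a finite simple exceptional group of Lie type. -/
def IsExcLie (X : Type*) [Group X] : Prop := ∃ p q, IsExcLieOfChar p q X

/-- `X` is a finite simple group of Lie type (classical or exceptional)
in characteristic `p`. -/
def IsLieTypeOfChar (p : ℕ) (X : Type*) [Group X] : Prop :=
  p.Prime ∧ ∃ a q : ℕ, 0 < a ∧ q = p ^ a ∧
    ((∃ n, 2 ≤ n ∧ ∃ ε ∈ pm, IsSimpleOfOrder X (ordPSL n ε q)) ∨
     (∃ n, 2 ≤ n ∧ IsSimpleOfOrder X (ordPSp n q)) ∨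
     (∃ n, 4 ≤ n ∧ ∃ ε ∈ pm, IsSimpleOfOrder X (ordPOmega n ε q)) ∨
     (p = 2 ∧ Odd a ∧ IsSimpleOfOrder X (ord2B2 q)) ∨
     (p = 3 ∧ Odd a ∧ IsSimpleOfOrder X (ord2G2 q)) ∨
     (p = 2 ∧ Odd a ∧ IsSimpleOfOrder X (ord2F4 q)) ∨
     IsSimpleOfOrder X (ord3D4 q) ∨
     IsSimpleOfOrder X (ordG2 q) ∨
     IsSimpleOfOrder X (ordF4 q) ∨
     (∃ ε ∈ pm, IsSimpleOfOrder X (ordE6 ε q)) ∨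
     IsSimpleOfOrder X (ordE7 q) ∨
     IsSimpleOfOrder X (ordE8 q))

/-- The order of the subgroup `S` lies between `core` and `c * core` (divisibility on
both sides): `S` has a normal "core" of the given order with quotient of order
dividing `c`.  We use this to express that `S` is "of type" a given Lie subgroup. -/
def cardSandwich {G : Type*} [Group G] (S : Subgroup G) (core : ℤ) (c : ℕ) : Prop :=
  core ∣ (Nat.card S : ℤ) ∧ (Nat.card S : ℤ) ∣ (c : ℤ) * core

/-- The transitive action of `G` on the cosets of `H` has a nontrivial subdegree
(size of an orbit of `H` on `G ⧸ H`) dividing `n`. -/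
def HasSubdegreeDvd {G : Type*} [Group G] (H : Subgroup G) (n : ℕ) : Prop :=
  ∃ x : G ⧸ H, x ≠ ((1 : G) : G ⧸ H) ∧ Nat.card (MulAction.orbit H x) ∣ n

/-! A subgroup whose index is prime to `p` contains a Sylow `p`-subgroup (push a Sylow
`p`-subgroup of the subgroup into the ambient group). So a non-parabolic point stabiliser has
index `v` divisible by `p`, and `p` is then coprime to `v - 1`. -/

theorem _root_.Nat.coprime_sub_one_of_dvd {p v : ℕ} (hpv : p ∣ v) (hv : 0 < v) :
    Nat.Coprime p (v - 1) :=
  ((Nat.coprime_self_sub_right hv).mpr (Nat.coprime_one_right v)).coprime_dvd_left hpv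

theorem _root_.Sylow.exists_le_of_not_dvd_index {G : Type*} [Group G] {p : ℕ} [Fact p.Prime]
    {H : Subgroup G} [Finite H] (hH : ¬ p ∣ H.index) : ∃ P : Sylow p G, (P : Subgroup G) ≤ H := by
  obtain ⟨Q⟩ : Nonempty (Sylow p H) := inferInstance
  have hQ : ¬ p ∣ (Q.map H.subtype).index := by
    rw [Subgroup.index_map_subtype]
    exact Nat.Prime.not_dvd_mul Fact.out Q.not_dvd_index hH
  exact ⟨(Q.2.map H.subtype).toSylow hQ, Subgroup.map_subtype_le _⟩

theorem dvd_index_of_not_isParabolic {G : Type*} [Group G] [Finite G] {p : ℕ} [Fact p.Prime]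
    {H : Subgroup G} (hH : ¬ IsParabolic p H) : p ∣ H.index :=
  not_not.mp (mt Sylow.exists_le_of_not_dvd_index hH)

theorem tits_design_lemma_general
    {G Pt Bl : Type*} [Group G] [Finite G] [MulAction G Pt]
    (I : Pt → Bl → Prop) (v k lam : ℕ)
    (hD : IsSymmetricDesign I v k lam)
    (hprim : IsPointPrimitive G Pt)
    (X : Subgroup G)
    (p : ℕ) (hLie : IsLieTypeOfChar p X)
    (α : Pt)
    (hnp : ¬ IsParabolic p (MulAction.stabilizer G α)) :
    Nat.gcd p (v - 1) = 1 := by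
  have : Fact p.Prime := ⟨hLie.1⟩
  have := hprim.1
  have hv : (MulAction.stabilizer G α).index = v :=
    (MulAction.index_stabilizer_of_transitive G α).trans hD.card_points
  rw [← hv]
  exact Nat.coprime_sub_one_of_dvd (dvd_index_of_not_isParabolic hnp)
    (Nat.pos_of_ne_zero Subgroup.index_ne_zero_of_finite)

/-- **Lemma 2.2 (Tits' lemma for designs).**  Suppose `D` is a symmetric `(v,k,λ)`
design admitting a flag-transitive, point-primitive almost simple automorphism group `G`
with socle `X` a finite simple group of Lie type in characteristic `p`.  If the point
stabiliser `G_α` does not contain `X` and is not a parabolic subgroup of `G` (that is,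
it contains no Sylow `p`-subgroup of `G`), then `gcd(p, v-1) = 1`. -/
theorem tits_design_lemma
    {G Pt Bl : Type*} [Group G] [Finite G] [MulAction G Pt] [MulAction G Bl]
    [FaithfulSMul G Pt]
    (I : Pt → Bl → Prop) (v k lam : ℕ)
    (hD : IsSymmetricDesign I v k lam)
    (hact : ActsOnDesign G I) (hflag : IsFlagTransitive G I)
    (hprim : IsPointPrimitive G Pt)
    (X : Subgroup G) (hAS : IsAlmostSimpleWithSocle G X)
    (p : ℕ) (hLie : IsLieTypeOfChar p X)
    (α : Pt)
    (hnc : ¬ X ≤ MulAction.stabilizer G α)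
    (hnp : ¬ IsParabolic p (MulAction.stabilizer G α)) :
    Nat.gcd p (v - 1) = 1 :=
  tits_design_lemma_general I v k lam hD hprim X p hLie α hnp

end Paper
end

section
/- Let D be a nontrivial symmetric (v, k, λ) design and let G be a flag-transitive automorphism group of D. Then |G| ≤ |G_α|³, where G_α is the stabiliser in G of a point α of D; that is, the point stabiliser is a large subgroup of G. -/
namespace Paper

/-! Flag-transitivity makes `G` transitive on points and on blocks, so
`|G| = v |G_α| = v |G_B|`; it also makes `G_α` transitive on the `r` blocks through `α` and
`G_B` transitive on the `k` points of `B`, whence `r ≤ |G_α|` and `k ≤ |G_B| = |G_α|`.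
Counting the pairs `(y, B)` with `y ≠ α` and `α, y ∈ B` gives `r (k - 1) = λ (v - 1) ≥ v - 1`,
so `v ≤ |G_α|²` and `|G| = v |G_α| ≤ |G_α|³`. -/

open MulAction

theorem card_group_eq_card_mul_card_stabilizer (G : Type*) {X : Type*} [Group G]
    [MulAction G X] [IsPretransitive G X] (x : X) :
    Nat.card G = Nat.card X * Nat.card (stabilizer G x) := by
  rw [← index_stabilizer_of_transitive G x, Subgroup.index_mul_card]

namespace IsSymmetricDesign

variable {P B : Type*} {I : P → B → Prop} {v k lam : ℕ}

theorem card_incident_mul_eq [Finite P] [Finite B] (hD : IsSymmetricDesign I v k lam) (x : P) :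
    Nat.card {b // I x b} * (k - 1) = lam * (v - 1) := by
  classical
  cases nonempty_fintype P
  cases nonempty_fintype B
  have hcount := Finset.card_mul_eq_card_mul (fun y b => I y b)
    (s := Finset.univ.erase x) (t := {b | I x b}) (m := lam) (n := k - 1)
    (fun y hy => by
      rw [Finset.bipartiteAbove, Finset.filter_filter, ← Fintype.card_subtype,
        ← Nat.card_eq_fintype_card, hD.card_pair x y (Finset.ne_of_mem_erase hy).symm])
    (fun b hb => by
      rw [Finset.bipartiteBelow, Finset.filter_erase, Finset.card_erase_of_mem
        (by simpa using hb), ← Fintype.card_subtype, ← Nat.card_eq_fintype_card, hD.card_block])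
  rw [Finset.card_erase_of_mem (Finset.mem_univ x), Finset.card_univ, ← Nat.card_eq_fintype_card,
    hD.card_points, ← Fintype.card_subtype, ← Nat.card_eq_fintype_card] at hcount
  rw [← hcount, mul_comm]

theorem one_le_lam [Finite P] [Finite B] (hD : IsSymmetricDesign I v k lam) (hk : 2 ≤ k)
    (hv : 0 < v) : 1 ≤ lam := by
  obtain ⟨b⟩ := Nat.card_pos_iff.mp (hD.card_blocks ▸ hv) |>.1
  have : Nontrivial {x // I x b} := by
    rw [← Finite.one_lt_card_iff_nontrivial, hD.card_block]
    omega
  obtain ⟨⟨x, hx⟩, ⟨y, hy⟩, hxy⟩ := this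
  have : Nonempty {c // I x c ∧ I y c} := ⟨⟨b, hx, hy⟩⟩
  rw [← hD.card_pair x y fun h => hxy (Subtype.ext h)]
  exact Nat.card_pos

theorem exists_incident_block [Finite P] [Finite B] (hD : IsSymmetricDesign I v k lam)
    (hk : 2 ≤ k) (hv : 2 ≤ v) (x : P) : ∃ b, I x b := by
  have hpos : 0 < Nat.card {b // I x b} * (k - 1) := by
    rw [hD.card_incident_mul_eq x]
    exact Nat.mul_pos (hD.one_le_lam hk (by omega)) (by omega)
  obtain ⟨⟨b, hb⟩⟩ := Nat.card_pos_iff.mp (Nat.pos_of_mul_pos_right hpos) |>.1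
  exact ⟨b, hb⟩

theorem exists_incident_point (hD : IsSymmetricDesign I v k lam) (hk : 0 < k) (b : B) :
    ∃ x, I x b := by
  obtain ⟨⟨x, hx⟩⟩ := Nat.card_pos_iff.mp (hD.card_block b ▸ hk) |>.1
  exact ⟨x, hx⟩

theorem le_sq_of_card_incident_le [Finite P] [Finite B] (hD : IsSymmetricDesign I v k lam)
    (hk : 2 ≤ k) (hv : 2 ≤ v) (x : P) {s : ℕ} (hr : Nat.card {b // I x b} ≤ s) (hks : k ≤ s) :
    v ≤ s ^ 2 := by
  have h : v - 1 ≤ s * (s - 1) := calc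
    v - 1 ≤ lam * (v - 1) := Nat.le_mul_of_pos_left _ (hD.one_le_lam hk (by omega))
    _ = Nat.card {b // I x b} * (k - 1) := (hD.card_incident_mul_eq x).symm
    _ ≤ s * (s - 1) := Nat.mul_le_mul hr (by omega)
  have : s * (s - 1) + s = s ^ 2 := by
    cases s <;> simp [sq, Nat.mul_succ]
  omega

end IsSymmetricDesign

namespace IsFlagTransitive

variable {G P B : Type*} [Group G] [MulAction G P] [MulAction G B] {I : P → B → Prop}

theorem flip (hflag : IsFlagTransitive G I) : IsFlagTransitive G (flip I) :=
  fun b b' x x' h h' => (hflag x x' b b' h h').imp fun _ => And.symm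

theorem isPretransitive (hflag : IsFlagTransitive G I) (hI : ∀ x, ∃ b, I x b) :
    IsPretransitive G P where
  exists_smul_eq x y := by
    obtain ⟨b, hb⟩ := hI x
    obtain ⟨c, hc⟩ := hI y
    obtain ⟨g, hg, -⟩ := hflag x y b c hb hc
    exact ⟨g, hg⟩

theorem card_incident_le_card_stabilizer [Finite G] (hflag : IsFlagTransitive G I) (x : P) :
    Nat.card {b // I x b} ≤ Nat.card (stabilizer G x) := by
  rcases isEmpty_or_nonempty {b // I x b} with h | ⟨b₀, hb₀⟩
  · simp
  have : ∀ b : {b // I x b}, ∃ g : stabilizer G x, g • b₀ = b.1 := fun b =>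
    let ⟨g, hgx, hgb⟩ := hflag x x b₀ b hb₀ b.2
    ⟨⟨g, hgx⟩, hgb⟩
  choose f hf using this
  exact Nat.card_le_card_of_injective f fun b c h => Subtype.ext (by rw [← hf b, ← hf c, h])

end IsFlagTransitive

theorem stabilizer_is_large_general
    {G Pt Bl : Type*} [Group G] [MulAction G Pt] [MulAction G Bl]
    (I : Pt → Bl → Prop) (v k lam : ℕ)
    (hD : IsSymmetricDesign I v k lam) (hnt : NontrivialDesign v k)
    (hflag : IsFlagTransitive G I)
    (α : Pt) :
    Nat.card G ≤ Nat.card (MulAction.stabilizer G α) ^ 3 := by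
  obtain ⟨hk, hkv⟩ := hnt
  refine (finite_or_infinite G).elim (fun _ => ?_) fun _ => by simp [Nat.card_eq_zero_of_infinite]
  have : Finite Pt := Nat.finite_of_card_ne_zero (by rw [hD.card_points]; omega)
  have : Finite Bl := Nat.finite_of_card_ne_zero (by rw [hD.card_blocks]; omega)
  have := hflag.isPretransitive (hD.exists_incident_block (by omega) (by omega))
  have := hflag.flip.isPretransitive (hD.exists_incident_point (by omega))
  obtain ⟨β, -⟩ := hD.exists_incident_block (by omega) (by omega) α
  set s := Nat.card (stabilizer G α)
  have hGα := card_group_eq_card_mul_card_stabilizer G α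
  have hGβ := card_group_eq_card_mul_card_stabilizer G β
  rw [hD.card_points] at hGα
  rw [hD.card_blocks, hGα] at hGβ
  have hks : k ≤ s := calc
    k = Nat.card {x // I x β} := (hD.card_block β).symm
    _ ≤ Nat.card (stabilizer G β) := hflag.flip.card_incident_le_card_stabilizer β
    _ = s := (Nat.eq_of_mul_eq_mul_left (by omega) hGβ).symm
  have hv := hD.le_sq_of_card_incident_le (by omega) (by omega) α
    (hflag.card_incident_le_card_stabilizer α) hks
  calc Nat.card G = v * s := hGα
    _ ≤ s ^ 2 * s := by gcongr
    _ = s ^ 3 := by ring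

/-- **Corollary 2.6.**  Let `D` be a nontrivial symmetric `(v,k,λ)` design and let `G`
be a flag-transitive automorphism group of `D`.  Then `|G| ≤ |G_α|³` for a point
stabiliser `G_α`, i.e. point stabilisers are large subgroups of `G`. -/
theorem stabilizer_is_large
    {G Pt Bl : Type*} [Group G] [MulAction G Pt] [MulAction G Bl]
    [FaithfulSMul G Pt]
    (I : Pt → Bl → Prop) (v k lam : ℕ)
    (hD : IsSymmetricDesign I v k lam) (hnt : NontrivialDesign v k)
    (hact : ActsOnDesign G I) (hflag : IsFlagTransitive G I)
    (α : Pt) :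
    Nat.card G ≤ Nat.card (MulAction.stabilizer G α) ^ 3 :=
  stabilizer_is_large_general I v k lam hD hnt hflag α

end Paper
end

section
/- Let D be a symmetric (v, k, λ) design with k ≤ v/2, and suppose mk = λd for positive integers m and d, where d divides v−1. Then: (a) m divides k−1, and hence gcd(m, k) = 1; (b) λ = λ₁λ₂, where λ₁ = gcd(λ, k−1) and λ₂ = gcd(λ, k); (c) setting k₁ = (k−1)/λ₁ and k₂ = k/λ₂, the integer k₂ divides d and λ₁ divides m; moreover λ₁ < k₂/2, gcd(k₁, k₂) = 1 and gcd(λ₁, k₂) = 1. -/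
namespace Paper

/-! Double counting gives `λ (v - 1) = k (k - 1)`. Together with `d ∣ v - 1` and `m k = λ d`
this yields `m ∣ k - 1`. As `k - 1` and `k` are coprime, `λ ∣ k (k - 1)` splits as `λ = λ₁ λ₂`,
and cancelling `λ₂` turns `m k = λ d` into `m k₂ = λ₁ d` with `λ₁` coprime to `k₂`.
Finally `2k ≤ v` gives `λ (2k - 1) ≤ k (k - 1)`, hence `2λ < k`, i.e. `2λ₁ < k₂`. -/

section Counting

open Finset

variable {Pt Bl : Type*} {I : Pt → Bl → Prop} [∀ x b, Decidable (I x b)] {v k lam : ℕ}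

lemma IsSymmetricDesign.card_filter_incident [Fintype Pt] (hD : IsSymmetricDesign I v k lam)
    (b : Bl) : #{x | I x b} = k := by
  rw [← hD.card_block b, Nat.card_eq_fintype_card, Fintype.card_subtype]

lemma IsSymmetricDesign.card_filter_incident_both [Fintype Bl] (hD : IsSymmetricDesign I v k lam)
    {x y : Pt} (hxy : x ≠ y) : #{b | I x b ∧ I y b} = lam := by
  rw [← hD.card_pair x y hxy, Nat.card_eq_fintype_card, Fintype.card_subtype]

-- Count the pairs `(y, b)` with `y ≠ x` and `x, y` both on `b`, first by `y`, then by `b`.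
lemma IsSymmetricDesign.card_blocks_through_mul [Fintype Pt] [Fintype Bl] [DecidableEq Pt]
    (hD : IsSymmetricDesign I v k lam) (x : Pt) :
    #{b | I x b} * (k - 1) = lam * (v - 1) := by
  have hv : Fintype.card Pt = v := by rw [← Nat.card_eq_fintype_card, hD.card_points]
  have by_point : ∑ y ∈ univ.erase x, #(({b | I x b} : Finset Bl).bipartiteAbove
      (fun y b => I y b) y) = lam * (v - 1) := by
    rw [sum_congr rfl fun y hy => ?_, sum_const, card_erase_of_mem (mem_univ x), card_univ,
      hv, smul_eq_mul, mul_comm]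
    rw [bipartiteAbove, filter_filter]
    exact hD.card_filter_incident_both (ne_of_mem_erase hy).symm
  have by_block : ∀ b ∈ ({b | I x b} : Finset Bl),
      #((univ.erase x).bipartiteBelow (fun y b => I y b) b) = k - 1 := by
    intro b hb
    rw [bipartiteBelow, filter_erase, card_erase_of_mem (by simpa using hb),
      hD.card_filter_incident]
  rw [← by_point, sum_card_bipartiteAbove_eq_sum_card_bipartiteBelow, sum_congr rfl by_block,
    sum_const, smul_eq_mul]

lemma IsSymmetricDesign.sum_card_blocks_through [Fintype Pt] [Fintype Bl]
    (hD : IsSymmetricDesign I v k lam) : ∑ x, #{b | I x b} = v * k := by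
  have hv : Fintype.card Bl = v := by rw [← Nat.card_eq_fintype_card, hD.card_blocks]
  have := sum_card_bipartiteAbove_eq_sum_card_bipartiteBelow (s := univ) (t := univ)
    (r := fun (x : Pt) (b : Bl) => I x b)
  simp only [bipartiteAbove, bipartiteBelow, hD.card_filter_incident] at this
  rw [this, sum_const, card_univ, hv, smul_eq_mul]

end Counting

theorem IsSymmetricDesign.lam_mul_sub_one {Pt Bl : Type*} {I : Pt → Bl → Prop} {v k lam : ℕ}
    (hD : IsSymmetricDesign I v k lam) (hv : 0 < v) : lam * (v - 1) = k * (k - 1) := by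
  classical
  have : Finite Pt := Nat.finite_of_card_ne_zero (by rw [hD.card_points]; omega)
  have : Finite Bl := Nat.finite_of_card_ne_zero (by rw [hD.card_blocks]; omega)
  cases nonempty_fintype Pt
  cases nonempty_fintype Bl
  have hcard : Fintype.card Pt = v := by rw [← Nat.card_eq_fintype_card, hD.card_points]
  refine Nat.eq_of_mul_eq_mul_left hv ?_
  calc v * (lam * (v - 1)) = ∑ x : Pt, Finset.card {b | I x b} * (k - 1) := by
        simp [hD.card_blocks_through_mul, hcard]
    _ = v * (k * (k - 1)) := by rw [← Finset.sum_mul, hD.sum_card_blocks_through, mul_assoc]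

theorem IsSymmetricDesign.two_mul_lam_lt {Pt Bl : Type*} {I : Pt → Bl → Prop} {v k lam : ℕ}
    (hD : IsSymmetricDesign I v k lam) (hk : 0 < k) (hkv : 2 * k ≤ v) : 2 * lam < k := by
  obtain ⟨j, rfl⟩ : ∃ j, k = j + 1 := ⟨k - 1, by omega⟩
  have hlamv := hD.lam_mul_sub_one (by omega)
  have : lam * (2 * j + 1) ≤ (j + 1) * j := by
    rw [Nat.add_sub_cancel] at hlamv
    exact hlamv ▸ Nat.mul_le_mul_left lam (by omega)
  nlinarith

lemma coprime_of_dvd_sub_one_of_dvd {a b k : ℕ} (hk : 0 < k) (ha : a ∣ k - 1) (hb : b ∣ k) :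
    Nat.Coprime a b :=
  (((Nat.coprime_self_sub_left hk).mpr (Nat.coprime_one_left k)).coprime_dvd_left ha
    ).coprime_dvd_right hb

lemma dvd_sub_one_of_mul_eq {v k lam m d : ℕ} (hk : 0 < k) (hdvd : d ∣ v - 1)
    (hmk : m * k = lam * d) (hlamv : lam * (v - 1) = k * (k - 1)) : m ∣ k - 1 := by
  obtain ⟨e, he⟩ := hdvd
  refine ⟨e, Nat.eq_of_mul_eq_mul_left hk ?_⟩
  calc k * (k - 1) = lam * d * e := by rw [← hlamv, he, mul_assoc]
    _ = k * (m * e) := by rw [← hmk]; ring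

lemma mul_div_gcd_eq {k lam m d : ℕ} (hlam : 0 < lam) (hmk : m * k = lam * d)
    (hsplit : lam = Nat.gcd lam (k - 1) * Nat.gcd lam k) :
    m * (k / Nat.gcd lam k) = Nat.gcd lam (k - 1) * d := by
  refine Nat.eq_of_mul_eq_mul_left (Nat.gcd_pos_of_pos_left k hlam) ?_
  calc Nat.gcd lam k * (m * (k / Nat.gcd lam k))
      = m * (Nat.gcd lam k * (k / Nat.gcd lam k)) := by ring
    _ = (Nat.gcd lam (k - 1) * Nat.gcd lam k) * d := by
        rw [Nat.mul_div_cancel' (Nat.gcd_dvd_right lam k), hmk, ← hsplit]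
    _ = Nat.gcd lam k * (Nat.gcd lam (k - 1) * d) := by ring

theorem design_parameter_divisibility_general
    {Pt Bl : Type*} (I : Pt → Bl → Prop) (v k lam m d : ℕ)
    (hD : IsSymmetricDesign I v k lam)
    (hkv : 2 * k ≤ v) (hd : 0 < d) (hlam : 0 < lam)
    (hdvd : d ∣ v - 1) (hmk : m * k = lam * d) :
    (m ∣ k - 1 ∧ Nat.gcd m k = 1) ∧
    (lam = Nat.gcd lam (k - 1) * Nat.gcd lam k) ∧
    (k / Nat.gcd lam k ∣ d ∧
     Nat.gcd lam (k - 1) ∣ m ∧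
     2 * Nat.gcd lam (k - 1) < k / Nat.gcd lam k ∧
     Nat.gcd ((k - 1) / Nat.gcd lam (k - 1)) (k / Nat.gcd lam k) = 1 ∧
     Nat.gcd (Nat.gcd lam (k - 1)) (k / Nat.gcd lam k) = 1) := by
  have hk : 0 < k := Nat.pos_of_mul_pos_left (hmk ▸ Nat.mul_pos hlam hd)
  have hlamv := hD.lam_mul_sub_one (by omega)
  have hm : m ∣ k - 1 := dvd_sub_one_of_mul_eq hk hdvd hmk hlamv
  set l₁ := Nat.gcd lam (k - 1)
  set l₂ := Nat.gcd lam k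
  have hsplit : lam = l₁ * l₂ := by
    refine ((Nat.gcd_mul_gcd_eq_iff_dvd_mul_of_coprime ?_).mpr ⟨v - 1, ?_⟩).symm
    · exact coprime_of_dvd_sub_one_of_dvd hk dvd_rfl dvd_rfl
    · rw [hlamv, mul_comm]
  have key := mul_div_gcd_eq hlam hmk hsplit
  have hk₂ : k / l₂ ∣ k := Nat.div_dvd_of_dvd (Nat.gcd_dvd_right lam k)
  have hcop : Nat.Coprime l₁ (k / l₂) :=
    coprime_of_dvd_sub_one_of_dvd hk (Nat.gcd_dvd_right lam (k - 1)) hk₂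
  have hlt : 2 * l₁ < k / l₂ := by
    refine Nat.lt_of_mul_lt_mul_left (a := l₂) ?_
    rw [Nat.mul_div_cancel' (Nat.gcd_dvd_right lam k), mul_left_comm, mul_comm l₂, ← hsplit]
    exact hD.two_mul_lam_lt hk hkv
  exact ⟨⟨hm, coprime_of_dvd_sub_one_of_dvd hk hm dvd_rfl⟩, hsplit,
    hcop.symm.dvd_of_dvd_mul_left ⟨m, by rw [← key, mul_comm]⟩,
    hcop.dvd_of_dvd_mul_right ⟨d, key⟩, hlt,
    coprime_of_dvd_sub_one_of_dvd hk (Nat.div_dvd_of_dvd (Nat.gcd_dvd_right lam (k - 1))) hk₂,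
    hcop⟩

/-- **Lemma 2.7.**  Let `D` be a symmetric `(v,k,λ)` design with `k ≤ v/2` and suppose
`m·k = λ·d` for positive integers `m, d` with `d ∣ v - 1`.  Writing
`λ₁ = gcd(λ, k-1)`, `λ₂ = gcd(λ, k)`, `k₁ = (k-1)/λ₁` and `k₂ = k/λ₂`, we have:
(a) `m ∣ k - 1` and `gcd(m,k) = 1`; (b) `λ = λ₁λ₂`; (c) `k₂ ∣ d`, `λ₁ ∣ m`,
`λ₁ < k₂/2`, `gcd(k₁,k₂) = 1` and `gcd(λ₁,k₂) = 1`. -/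
theorem design_parameter_divisibility
    {Pt Bl : Type*} (I : Pt → Bl → Prop) (v k lam m d : ℕ)
    (hD : IsSymmetricDesign I v k lam)
    (hkv : 2 * k ≤ v) (hm : 0 < m) (hd : 0 < d) (hlam : 0 < lam)
    (hdvd : d ∣ v - 1) (hmk : m * k = lam * d) :
    (m ∣ k - 1 ∧ Nat.gcd m k = 1) ∧
    (lam = Nat.gcd lam (k - 1) * Nat.gcd lam k) ∧
    (k / Nat.gcd lam k ∣ d ∧
     Nat.gcd lam (k - 1) ∣ m ∧
     2 * Nat.gcd lam (k - 1) < k / Nat.gcd lam k ∧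
     Nat.gcd ((k - 1) / Nat.gcd lam (k - 1)) (k / Nat.gcd lam k) = 1 ∧
     Nat.gcd (Nat.gcd lam (k - 1)) (k / Nat.gcd lam k) = 1) :=
  design_parameter_divisibility_general I v k lam m d hD hkv hd hlam hdvd hmk

end Paper
end
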